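/- arXiv:math/0605149 — 3 statements merged into one kernel-verified Lean document; each statement's English description precedes it below -/
import Mathlib

section
/- Let A be an abelian topological group and U a neighborhood of 0 in A. Then the polar U^▷ = {χ ∈ Â : χ(U) ⊆ Λ₁} is a compact subset of the Pontryagin dual Â (with the compact-open topology). -/
open scoped Topology

noncomputable section

/-- The circle group `T = R/Z`. -/
abbrev Torus := AddCircle (1 : ℝ)

/-- `Λ₁`, the image of `[-1/4, 1/4]` in `T = R/Z`. -/
def Lam : Set Torus := (fun x : ℝ => (x : Torus)) '' Set.Icc (-(1/4)) (1/4)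

/-- The Pontryagin dual: continuous characters into `T = R/Z`, with the compact-open
topology (the topology on `ContinuousAddMonoidHom` is induced from `C(A, T)`). -/
abbrev PDual (A : Type*) [AddCommGroup A] [TopologicalSpace A] [IsTopologicalAddGroup A] :=
  ContinuousAddMonoidHom A Torus

/-- The polar `S^▷ = {χ ∈ Â : χ(S) ⊆ Λ₁}` of a subset `S ⊆ A`. -/
def polar {A : Type*} [AddCommGroup A] [TopologicalSpace A] [IsTopologicalAddGroup A]
    (S : Set A) : Set (PDual A) := {χ | ∀ s ∈ S, χ s ∈ Lam}

/-- The prepolar `Φ^◁ = {a ∈ A : χ(a) ∈ Λ₁ for all χ ∈ Φ}` of a set `Φ ⊆ Â`. -/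
def prepolar {A : Type*} [AddCommGroup A] [TopologicalSpace A] [IsTopologicalAddGroup A]
    (Φ : Set (PDual A)) : Set A := {a | ∀ χ ∈ Φ, χ a ∈ Lam}

/-- The evaluation homomorphism `α_A : A → Â̂`, `α_A(a)(χ) = χ(a)`. -/
def evalHom {A : Type*} [AddCommGroup A] [TopologicalSpace A] [IsTopologicalAddGroup A]
    (a : A) : PDual (PDual A) where
  toFun := fun χ => χ a
  map_zero' := rfl
  map_add' := fun _ _ => rfl
  continuous_toFun := continuous_eval_const a

/-!
A character `χ` with `χ(U) ⊆ Λ₁` is controlled near `0`: if `a, 2a, …, na ∈ U`, then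
`‖jχ(a)‖ ≤ 1/4` for all `j ≤ n`, and since no multiple `jχ(a)` can wrap around the circle before
exceeding `1/2`, this forces `‖χ(a)‖ ≤ 1/(4n)`. Hence the polar is equicontinuous, so every
additive map `A → T` in its pointwise closure is continuous, and that closure, a closed subset
of the compact space `T^A`, is the polar itself. By Arzelà–Ascoli the pointwise and
compact-open topologies agree on an equicontinuous set, so the polar is compact.
-/

namespace AddCircle

variable {p : ℝ}

theorem exists_coe_eq_abs_eq_norm (t : AddCircle p) :
    ∃ x : ℝ, (x : AddCircle p) = t ∧ |x| = ‖t‖ := by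
  obtain ⟨y, rfl⟩ := QuotientAddGroup.mk_surjective t
  refine ⟨y - round (p⁻¹ * y) * p, ?_, (norm_eq p).symm⟩
  rw [coe_sub, (coe_eq_zero_iff p).mpr ⟨round (p⁻¹ * y), zsmul_eq_mul _ _⟩, sub_zero]

theorem norm_nsmul_eq (hp : p ≠ 0) {t : AddCircle p} {n : ℕ} (h : n * ‖t‖ ≤ |p| / 2) :
    ‖n • t‖ = n * ‖t‖ := by
  obtain ⟨x, rfl, hx⟩ := exists_coe_eq_abs_eq_norm t
  have habs : |n • x| = n * ‖(x : AddCircle p)‖ := by rw [nsmul_eq_mul, abs_mul, Nat.abs_cast, hx]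
  rw [← coe_nsmul, (norm_coe_eq_abs_iff p hp).mpr (habs ▸ h), habs]

theorem natCast_mul_norm_le_of_forall_norm_nsmul_le (hp : p ≠ 0) {t : AddCircle p} {r : ℝ}
    (hr : 2 * r ≤ |p| / 2) {n : ℕ} (h : ∀ j ≤ n, ‖j • t‖ ≤ r) : n * ‖t‖ ≤ r := by
  induction n with
  | zero => simpa using h 0 le_rfl
  | succ n ih =>
    have h_one : ‖t‖ ≤ r := by simpa using h 1 (by omega)
    have h_n : n * ‖t‖ ≤ r := ih fun j hj ↦ h j (by omega)
    have h_succ : ((n + 1 : ℕ) : ℝ) * ‖t‖ ≤ |p| / 2 := by push_cast; linarith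
    rw [← norm_nsmul_eq hp h_succ]
    exact h (n + 1) le_rfl

end AddCircle

theorem lam_eq_closedBall : Lam = Metric.closedBall 0 (1 / 4) := by
  ext t
  rw [mem_closedBall_zero_iff]
  constructor
  · rintro ⟨x, hx, rfl⟩
    have h_abs : |x| ≤ 1 / 4 := abs_le.mpr ⟨by linarith [hx.1], hx.2⟩
    rw [(AddCircle.norm_coe_eq_abs_iff 1 one_ne_zero).mpr (by norm_num; linarith)]
    exact h_abs
  · intro ht
    obtain ⟨x, rfl, hx⟩ := AddCircle.exists_coe_eq_abs_eq_norm t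
    exact ⟨x, abs_le.mp (hx ▸ ht), rfl⟩

theorem ContinuousAddMonoidHom.isCompact_setOf_mapsTo {X Y : Type*} [TopologicalSpace X]
    [AddGroup X] [IsTopologicalAddGroup X] [UniformSpace Y] [AddGroup Y] [IsUniformAddGroup Y]
    [CompactSpace Y] [T2Space Y] (U : Set X) {V : Set Y} (hV : IsClosed V)
    (h : EquicontinuousAt (fun f : {f : X →+ Y | Set.MapsTo f U V} ↦ (f : X → Y)) 0) :
    IsCompact {f : ContinuousAddMonoidHom X Y | Set.MapsTo f U V} := by
  have h_equicont := equicontinuous_of_equicontinuousAt_zero _ h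
  have h_image : ContinuousMap.toFun '' (toContinuousMap '' {f | Set.MapsTo f U V}) =
      Set.pi U (fun _ ↦ V) ∩ Set.range ((↑) : (X →+ Y) → X → Y) := by
    ext g
    constructor
    · rintro ⟨-, ⟨f, hf, rfl⟩, rfl⟩
      exact ⟨hf, f.toAddMonoidHom, rfl⟩
    · rintro ⟨hg, f, rfl⟩
      have hf : Continuous f := h_equicont.continuous ⟨f, hg⟩
      exact ⟨_, ⟨⟨f, hf⟩, hg, rfl⟩, rfl⟩
  rw [(isInducing_toContinuousMap X Y).isCompact_iff]
  refine ArzelaAscoli.isCompact_of_equicontinuous _ ?_ ?_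
  · rw [h_image]
    exact ((isClosed_set_pi fun _ _ ↦ hV).inter (AddMonoidHom.isClosed_range_coe X Y)).isCompact
  · intro x₀ W hW
    filter_upwards [h_equicont x₀ W hW] with x hx
    rintro ⟨-, f, hf, rfl⟩
    exact hx ⟨f.toAddMonoidHom, hf⟩

variable {A : Type*} [AddCommGroup A] [TopologicalSpace A] [IsTopologicalAddGroup A]

theorem equicontinuousAt_zero_setOf_mapsTo_lam {U : Set A} (hU : U ∈ 𝓝 (0 : A)) :
    EquicontinuousAt (fun f : {f : A →+ Torus | Set.MapsTo f U Lam} ↦ (f : A → Torus)) 0 := by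
  rw [Metric.equicontinuousAt_iff_right]
  intro ε hε
  obtain ⟨n, hn⟩ := exists_nat_gt (1 / (4 * ε))
  have h_nε : 1 / 4 < n * ε := by rw [div_lt_iff₀ (by positivity)] at hn; linarith
  have h_multiples : ∀ᶠ a in 𝓝 (0 : A), ∀ j ≤ n, j • a ∈ U :=
    (Set.finite_le_nat n).eventually_all.mpr fun j _ ↦
      ((continuous_nsmul j).tendsto' 0 0 (smul_zero j)).eventually_mem hU
  filter_upwards [h_multiples] with a ha f
  have h_norm : n * ‖f.1 a‖ ≤ 1 / 4 :=
    AddCircle.natCast_mul_norm_le_of_forall_norm_nsmul_le one_ne_zero (by norm_num) fun j hj ↦ by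
      rw [← map_nsmul, ← mem_closedBall_zero_iff, ← lam_eq_closedBall]
      exact f.2 (ha j hj)
  rw [map_zero, dist_zero_left]
  exact lt_of_mul_lt_mul_left (h_norm.trans_lt h_nε) n.cast_nonneg

/-- For a neighborhood `U` of `0` in `A`, the polar `U^▷` is compact in the Pontryagin
dual `Â` with the compact-open topology. -/
theorem isCompact_polar_of_nhds {U : Set A} (hU : U ∈ 𝓝 (0 : A)) :
    IsCompact (polar U) := by
  have h_closed : IsClosed Lam := lam_eq_closedBall ▸ Metric.isClosed_closedBall
  exact ContinuousAddMonoidHom.isCompact_setOf_mapsTo U h_closed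
    (equicontinuousAt_zero_setOf_mapsTo_lam hU)

end
end

section
/- Let A be an abelian topological group with a dense subgroup D. If D is locally quasi-convex, then A is locally quasi-convex. In particular, the completion of a locally quasi-convex group is locally quasi-convex. -/
/-!
Given a neighbourhood `V` of `0` in `A`, choose a closed neighbourhood `C ⊆ V`, a neighbourhood
`U` of `0` in `D` with `U^▷◁ ⊆ C`, and an open `W ∋ 0` in `A` with `W ∩ D ⊆ U`. Every character
of the dense subgroup `D` extends to `A`, and since `Λ₁` is closed and `W` open, the extension
lies in `W^▷` as soon as the character lies in `(W ∩ D)^▷`; hence `D ∩ W^▷◁ ⊆ U^▷◁ ⊆ C`.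

The set `W^▷◁` need not be open, so density is applied through `W' = {x ∈ W | 2x ∈ W}`:
for `χ ∈ W^▷` both `χ` and `2χ` lie in `W'^▷`, so `χ` maps `W'^▷◁` into `Λ_{1/8}`, whence
`W'^▷◁ + W'^▷◁ ⊆ W^▷◁`. Thus every point of `W'^▷◁` is a limit of points of `D ∩ W^▷◁`, and
`W'^▷◁ ⊆ closure (D ∩ W^▷◁) ⊆ C ⊆ V`.
-/

open scoped Topology

noncomputable section

variable {A : Type*} [AddCommGroup A] [TopologicalSpace A] [IsTopologicalAddGroup A]

def Lam8 : Set Torus := (fun x : ℝ => (x : Torus)) '' Set.Icc (-(1/8)) (1/8)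

lemma isClosed_lam : IsClosed Lam :=
  (isCompact_Icc.image (AddCircle.continuous_mk' 1)).isClosed

lemma add_mem_lam_of_mem_lam8 {s t : Torus} (hs : s ∈ Lam8) (ht : t ∈ Lam8) :
    s + t ∈ Lam := by
  obtain ⟨x, ⟨hx₁, hx₂⟩, rfl⟩ := hs
  obtain ⟨y, ⟨hy₁, hy₂⟩, rfl⟩ := ht
  exact ⟨x + y, ⟨by linarith, by linarith⟩, AddCircle.coe_add _ x y⟩

lemma mem_lam8_of_add_self_mem_lam {t : Torus} (ht : t ∈ Lam) (h2t : t + t ∈ Lam) :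
    t ∈ Lam8 := by
  obtain ⟨x, ⟨hx₁, hx₂⟩, rfl⟩ := ht
  obtain ⟨y, ⟨hy₁, hy₂⟩, hy⟩ := h2t
  -- `x + x - y` is an integer of absolute value at most `3/4`, hence `0`.
  obtain ⟨n, hn⟩ : ∃ n : ℤ, (n : ℝ) = x + x - y := by
    have : ((x + x - y : ℝ) : Torus) = 0 := by
      rw [AddCircle.coe_sub, AddCircle.coe_add, ← hy, sub_self]
    simpa using (AddCircle.coe_eq_zero_iff 1).1 this
  have hn0 : n = 0 := by
    have h₁ : (n : ℝ) < 1 := by linarith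
    have h₂ : (-1 : ℝ) < n := by linarith
    have : n < 1 := by exact_mod_cast h₁
    have : -1 < n := by exact_mod_cast h₂
    omega
  subst hn0
  push_cast at hn
  exact ⟨x, ⟨by linarith, by linarith⟩, rfl⟩

theorem exists_continuousAddMonoidHom_extension_of_dense {G : Type*} [AddCommGroup G]
    [UniformSpace G] [IsUniformAddGroup G] [CompleteSpace G] [T2Space G]
    (D : AddSubgroup A) (hD : Dense (D : Set A)) (ψ : ContinuousAddMonoidHom D G) :
    ∃ χ : ContinuousAddMonoidHom A G, ∀ d : D, χ d = ψ d := by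
  let _ : UniformSpace A := IsTopologicalAddGroup.rightUniformSpace A
  have : IsUniformAddGroup A := isUniformAddGroup_of_addCommGroup
  have hui : IsUniformInducing ((↑) : D → A) := isUniformEmbedding_subtype_val.isUniformInducing
  have hdr : DenseRange ((↑) : D → A) := hD.denseRange_val
  have hdi : IsDenseInducing ((↑) : D → A) := hui.isDenseInducing hdr
  have hψ : UniformContinuous ψ :=
    uniformContinuous_of_continuousAt_zero ψ (map_continuous ψ).continuousAt
  have hcont : Continuous (hdi.extend ψ) :=
    (uniformContinuous_uniformly_extend hui hdr hψ).continuous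
  have hext : ∀ d : D, hdi.extend ψ d = ψ d := hdi.extend_eq (map_continuous ψ)
  refine ⟨⟨⟨⟨hdi.extend ψ, by simpa using hext 0⟩, fun x y => ?_⟩, hcont⟩, hext⟩
  refine hdr.induction_on₂
    (p := fun x y => hdi.extend ψ (x + y) = hdi.extend ψ x + hdi.extend ψ y)
    (isClosed_eq (by fun_prop) (by fun_prop)) (fun a b => ?_) x y
  simp only [← AddSubgroup.coe_add, hext, map_add]

def halve {M : Type*} [Add M] (W : Set M) : Set M := W ∩ (fun x => x + x) ⁻¹' W

lemma halve_mem_nhds_zero {W : Set A} (hW : W ∈ 𝓝 (0 : A)) : halve W ∈ 𝓝 (0 : A) :=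
  Filter.inter_mem hW <| (continuous_id.add continuous_id).continuousAt.preimage_mem_nhds
    (by simpa using hW)

lemma subset_prepolar_polar (S : Set A) : S ⊆ prepolar (polar S) :=
  fun a ha _ hχ => hχ a ha

lemma prepolar_polar_mono {S T : Set A} (h : S ⊆ T) : prepolar (polar S) ⊆ prepolar (polar T) :=
  fun _ ha χ hχ => ha χ fun s hs => hχ s (h hs)

lemma mem_lam8_of_mem_prepolar_polar_halve {W : Set A} {a : A}
    (ha : a ∈ prepolar (polar (halve W))) {χ : PDual A} (hχ : χ ∈ polar W) : χ a ∈ Lam8 :=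
  mem_lam8_of_add_self_mem_lam (ha χ fun s hs => hχ s hs.1)
    (ha (χ + χ) fun s hs => by simpa [← map_add] using hχ _ hs.2)

lemma add_mem_prepolar_polar_of_mem_halve {W : Set A} {a b : A}
    (ha : a ∈ prepolar (polar (halve W))) (hb : b ∈ prepolar (polar (halve W))) :
    a + b ∈ prepolar (polar W) := fun χ hχ => by
  simpa only [map_add] using add_mem_lam_of_mem_lam8
    (mem_lam8_of_mem_prepolar_polar_halve ha hχ) (mem_lam8_of_mem_prepolar_polar_halve hb hχ)

lemma prepolar_polar_halve_subset_closure {D W : Set A} (hD : Dense D) (hW : W ∈ 𝓝 (0 : A)) :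
    prepolar (polar (halve W)) ⊆ closure (D ∩ prepolar (polar W)) := by
  intro a ha
  rw [mem_closure_iff_nhds]
  intro t ht
  have hnear : {x | x - a ∈ halve W} ∈ 𝓝 a :=
    (continuous_sub_right a).continuousAt.preimage_mem_nhds <| by
      simpa using halve_mem_nhds_zero hW
  obtain ⟨x, hxD, hxt, hx⟩ := hD.inter_nhds_nonempty (Filter.inter_mem ht hnear)
  refine ⟨x, hxt, hxD, ?_⟩
  simpa using add_mem_prepolar_polar_of_mem_halve ha (subset_prepolar_polar _ hx)

lemma mem_polar_of_dense {D W : Set A} (hD : Dense D) (hW : IsOpen W) {χ : PDual A}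
    (hχ : ∀ d ∈ W ∩ D, χ d ∈ Lam) : χ ∈ polar W := fun _ hw =>
  isClosed_lam.closure_subset <|
    map_mem_closure (map_continuous χ) (hD.open_subset_closure_inter hW hw) hχ

lemma mem_prepolar_polar_preimage_val {D : AddSubgroup A} (hD : Dense (D : Set A)) {W : Set A}
    (hW : IsOpen W) {d : D} (hd : (d : A) ∈ prepolar (polar W)) :
    d ∈ prepolar (polar (Subtype.val ⁻¹' W : Set D)) := by
  intro ψ hψ
  obtain ⟨χ, hχ⟩ := exists_continuousAddMonoidHom_extension_of_dense D hD ψ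
  rw [← hχ]
  exact hd χ <| mem_polar_of_dense hD hW fun x ⟨hxW, hxD⟩ => by
    simpa [hχ ⟨x, hxD⟩] using hψ ⟨x, hxD⟩ hxW

/-- If a dense subgroup `D` of `A` is locally quasi-convex (with the subspace topology),
then `A` is locally quasi-convex. -/
theorem locallyQuasiConvex_of_dense_subgroup (D : AddSubgroup A) (hD : Dense (D : Set A))
    (hlqc : (𝓝 (0 : D)).HasBasis (fun U : Set D => U ∈ 𝓝 (0 : D))
      (fun U => prepolar (polar U))) :
    (𝓝 (0 : A)).HasBasis (fun U : Set A => U ∈ 𝓝 (0 : A))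
      (fun U => prepolar (polar U)) := by
  refine ⟨fun V => ⟨fun hV => ?_, fun ⟨U, hU, hUV⟩ =>
    Filter.mem_of_superset hU ((subset_prepolar_polar U).trans hUV)⟩⟩
  obtain ⟨C, hC, hC_closed, hCV⟩ := exists_mem_nhds_isClosed_subset hV
  obtain ⟨U, hU, hUC⟩ :=
    hlqc.mem_iff.1 (continuous_subtype_val.continuousAt.preimage_mem_nhds hC)
  obtain ⟨u, hu, huU⟩ := (mem_nhds_subtype _ _ _).1 hU
  set W := interior u
  have hW : W ∈ 𝓝 (0 : A) := interior_mem_nhds.2 hu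
  have hWU : Subtype.val ⁻¹' W ⊆ U := (Set.preimage_mono interior_subset).trans huU
  have hDC : (D : Set A) ∩ prepolar (polar W) ⊆ C := fun a ⟨haD, ha⟩ =>
    hUC <| prepolar_polar_mono hWU <|
      mem_prepolar_polar_preimage_val (d := ⟨a, haD⟩) hD isOpen_interior ha
  refine ⟨halve W, halve_mem_nhds_zero hW, ?_⟩
  calc prepolar (polar (halve W)) ⊆ closure ((D : Set A) ∩ prepolar (polar W)) :=
        prepolar_polar_halve_subset_closure hD hW
    _ ⊆ C := closure_minimal hDC hC_closed
    _ ⊆ V := hCV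

end
end

section
/- Let A be a Hausdorff abelian topological group such that the evaluation map α_A : A → Â̂ is injective, and let K be a compact subgroup of A. Then K is dually closed in A (K = K^▷◁) and dually embedded in A (every continuous character of K extends to a continuous character of A). -/
/-!
Via `α_A`, the group `A` maps continuously and injectively into the compact group `T^Â`, and on
the compact set `K` this map is a homeomorphism onto its image. So it suffices that in every
power `T^D` characters extend from compact subgroups and separate points from them. Since `Λ₁`
contains no nontrivial subgroup of `T`, a character of a compact subgroup of `T^D` only sees
finitely many coordinates, and so does a neighbourhood of a point missing a closed subgroup; this
reduces `T^D` to `T^n`. There one inducts on `n`, splitting off one circle factor and using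
that the closed subgroups of `T` are `T` itself and the finite cyclic groups `(1/j)ℤ/ℤ`.
Finally, if `χ` kills `K` but not `a`, then every multiple of `χ` lies in `K^▷`, so `a ∉ K^▷◁`.
-/

open scoped Topology

noncomputable section

lemma zero_mem_Lam : (0 : Torus) ∈ Lam :=
  ⟨0, by norm_num, by simp⟩

lemma Lam_mem_nhds_zero : Lam ∈ 𝓝 (0 : Torus) := by
  have hopen : IsOpen ((fun x : ℝ => (x : Torus)) '' Set.Ioo (-(1/4)) (1/4)) :=
    QuotientAddGroup.isOpenMap_coe _ isOpen_Ioo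
  exact Filter.mem_of_superset (hopen.mem_nhds ⟨0, by norm_num, by simp⟩)
    (Set.image_mono Set.Ioo_subset_Icc_self)

lemma coe_notMem_Lam {r : ℝ} (hr : r ∈ Set.Ioc (1/4) (1/2)) : (r : Torus) ∉ Lam := by
  obtain ⟨hr₁, hr₂⟩ := hr
  rintro ⟨u, ⟨hu₁, hu₂⟩, hur⟩
  have := (AddCircle.coe_eq_coe_iff_of_mem_Ico (a := -(1/4))
    ⟨hu₁, by linarith⟩ ⟨by linarith, by linarith⟩).1 hur
  linarith

lemma exists_nat_mul_mem_Ioc {s : ℝ} (hs₀ : 0 < s) (hs : s ≤ 1/4) :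
    ∃ n : ℕ, n * s ∈ Set.Ioc (1/4) (1/2) := by
  refine ⟨⌊1 / (4 * s)⌋₊ + 1, ?_, ?_⟩
  · have h := Nat.lt_floor_add_one (1 / (4 * s))
    rw [div_lt_iff₀ (by positivity)] at h
    push_cast
    linarith
  · have h := Nat.floor_le (a := 1 / (4 * s)) (by positivity)
    have h' : 1 / (4 * s) * s = 1/4 := by field_simp
    push_cast
    nlinarith

lemma eq_zero_of_forall_zsmul_mem_Lam {x : Torus} (h : ∀ n : ℤ, n • x ∈ Lam) : x = 0 := by
  obtain ⟨s, ⟨hs₁, hs₂⟩, rfl⟩ : x ∈ Lam := by simpa using h 1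
  have key : ∀ t : ℝ, 0 < t → t ≤ 1/4 → ∃ n : ℕ, (n : ℤ) • (t : Torus) ∉ Lam := by
    intro t ht₀ ht
    obtain ⟨n, hn⟩ := exists_nat_mul_mem_Ioc ht₀ ht
    refine ⟨n, ?_⟩
    rw [← AddCircle.coe_zsmul, zsmul_eq_mul, Int.cast_natCast]
    exact coe_notMem_Lam hn
  rcases lt_trichotomy s 0 with hneg | rfl | hpos
  · obtain ⟨n, hn⟩ := key (-s) (by linarith) (by linarith)
    exact absurd (by simpa [AddCircle.coe_neg] using h (-n)) hn
  · simp
  · obtain ⟨n, hn⟩ := key s hpos hs₂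
    exact absurd (h n) hn

namespace Torus

lemma zsmul_eq_zero_iff_mem_zmultiples {j : ℤ} (hj : j ≠ 0) {x : Torus} :
    j • x = 0 ↔ x ∈ AddSubgroup.zmultiples ((j⁻¹ : ℝ) : Torus) := by
  have hj' : (j : ℝ) ≠ 0 := by exact_mod_cast hj
  obtain ⟨r, rfl⟩ := QuotientAddGroup.mk_surjective x
  rw [AddSubgroup.mem_zmultiples_iff]
  constructor
  · intro h
    obtain ⟨i, hi⟩ := (AddCircle.coe_eq_zero_iff (1 : ℝ)).1
      (by rwa [AddCircle.coe_zsmul] : ((j • r : ℝ) : Torus) = 0)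
    refine ⟨i, ?_⟩
    rw [← AddCircle.coe_zsmul]
    congr 1
    rw [zsmul_eq_mul, mul_one] at hi
    rw [zsmul_eq_mul, hi, zsmul_eq_mul]
    field_simp
  · rintro ⟨i, hi⟩
    rw [← hi, smul_comm, ← AddCircle.coe_zsmul, zsmul_eq_mul, mul_inv_cancel₀ hj',
      AddCircle.coe_period, smul_zero]

lemma eq_top_or_eq_zmultiples_of_isClosed {C : AddSubgroup Torus} (hC : IsClosed (C : Set Torus)) :
    C = ⊤ ∨ ∃ j : ℤ, j ≠ 0 ∧ C = AddSubgroup.zmultiples ((j⁻¹ : ℝ) : Torus) := by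
  set π := QuotientAddGroup.mk' (AddSubgroup.zmultiples (1 : ℝ))
  have hπ : Function.Surjective π := QuotientAddGroup.mk'_surjective _
  have hC_eq : (C.comap π).map π = C := AddSubgroup.map_comap_eq_self_of_surjective hπ C
  rcases AddSubgroup.dense_or_cyclic (C.comap π) with hdense | ⟨a, ha⟩
  · left
    have : C.comap π = ⊤ := SetLike.coe_injective <|
      (hC.preimage continuous_quot_mk).closure_eq.symm.trans hdense.closure_eq
    rw [← hC_eq, this, AddSubgroup.map_top_of_surjective _ hπ]
  · right
    rw [← AddSubgroup.zmultiples_eq_closure] at ha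
    have h1 : (1 : ℝ) ∈ C.comap π := by
      simp [AddSubgroup.mem_comap, π, AddCircle.coe_period]
    obtain ⟨j, hj⟩ := AddSubgroup.mem_zmultiples_iff.1 (ha ▸ h1)
    rw [zsmul_eq_mul] at hj
    have hj0 : (j : ℝ) ≠ 0 := by rintro h; simp [h] at hj
    refine ⟨j, by exact_mod_cast hj0, ?_⟩
    rw [← hC_eq, ha, AddMonoidHom.map_zmultiples, eq_inv_of_mul_eq_one_right hj]
    rfl

end Torus

def HasCharacterExtension (G : Type*) [AddCommGroup G] [TopologicalSpace G]
    [IsTopologicalAddGroup G] : Prop :=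
  ∀ C : AddSubgroup G, IsCompact (C : Set G) → ∀ ψ : PDual C, ∃ η : PDual G, ∀ c : C, η c = ψ c

def HasCharacterSeparation (G : Type*) [AddCommGroup G] [TopologicalSpace G]
    [IsTopologicalAddGroup G] : Prop :=
  ∀ C : AddSubgroup G, IsCompact (C : Set G) → ∀ y ∉ C,
    ∃ η : PDual G, (∀ c ∈ C, η c = 0) ∧ η y ≠ 0

namespace Torus

def zsmulChar (n : ℤ) : PDual Torus := ⟨zsmulAddGroupHom n, continuous_zsmul n⟩

@[simp] lemma zsmulChar_apply (n : ℤ) (x : Torus) : zsmulChar n x = n • x := rfl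

lemma hasCharacterSeparation : HasCharacterSeparation Torus := by
  intro C hC t ht
  rcases eq_top_or_eq_zmultiples_of_isClosed hC.isClosed with rfl | ⟨j, hj, rfl⟩
  · exact absurd (AddSubgroup.mem_top t) ht
  · refine ⟨zsmulChar j, fun c hc => ?_, ?_⟩
    · exact (zsmul_eq_zero_iff_mem_zmultiples hj).2 hc
    · exact mt (zsmul_eq_zero_iff_mem_zmultiples hj).1 ht

lemma hasCharacterExtension : HasCharacterExtension Torus := by
  intro C hC ψ
  rcases eq_top_or_eq_zmultiples_of_isClosed hC.isClosed with rfl | ⟨j, hj, rfl⟩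
  · exact ⟨ψ.comp ⟨(AddSubgroup.topEquiv (G := Torus)).symm.toAddMonoidHom,
      continuous_id.subtype_mk _⟩, fun c => rfl⟩
  · set g : AddSubgroup.zmultiples ((j⁻¹ : ℝ) : Torus) := ⟨_, AddSubgroup.mem_zmultiples _⟩
    obtain ⟨i, hi⟩ : ∃ i : ℤ, i • ((j⁻¹ : ℝ) : Torus) = ψ g := by
      have hg : j • g = 0 := Subtype.ext ((zsmul_eq_zero_iff_mem_zmultiples hj).2 g.2)
      rw [← AddSubgroup.mem_zmultiples_iff, ← zsmul_eq_zero_iff_mem_zmultiples hj,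
        ← map_zsmul, hg, map_zero]
    refine ⟨zsmulChar i, fun ⟨c, hc⟩ => ?_⟩
    obtain ⟨k, rfl⟩ := AddSubgroup.mem_zmultiples_iff.1 hc
    have : (⟨k • _, hc⟩ : AddSubgroup.zmultiples ((j⁻¹ : ℝ) : Torus)) = k • g := rfl
    rw [this, map_zsmul, ← hi, zsmulChar_apply, smul_comm]
    rfl

end Torus

lemma ContinuousAddMonoidHom.exists_comp_eq_of_surjective {X Y M : Type*} [AddCommGroup X]
    [TopologicalSpace X] [CompactSpace X] [AddCommGroup Y] [TopologicalSpace Y] [T2Space Y]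
    [AddCommGroup M] [TopologicalSpace M] (q : X →ₜ+ Y) (hq : Function.Surjective q)
    (ψ : X →ₜ+ M) (hψ : ∀ x, q x = 0 → ψ x = 0) : ∃ φ : Y →ₜ+ M, ∀ x, φ (q x) = ψ x := by
  have hquot := q.continuous.isClosedMap.isQuotientMap q.continuous hq
  have hfac : Function.FactorsThrough ψ q := fun x x' h => by
    rw [← sub_eq_zero, ← map_sub, hψ _ (by rw [map_sub, h, sub_self])]
  set φ := hquot.lift (f := q.toContinuousMap) ψ.toContinuousMap hfac
  have hφ : ∀ x, φ (q x) = ψ x := fun x =>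
    ContinuousMap.congr_fun (hquot.lift_comp ψ.toContinuousMap hfac) x
  refine ⟨⟨⟨⟨φ, ?_⟩, fun y y' => ?_⟩, φ.continuous⟩, hφ⟩
  · simpa [map_zero] using hφ 0
  · obtain ⟨x, rfl⟩ := hq y
    obtain ⟨x', rfl⟩ := hq y'
    simp only [← map_add, hφ]

section Transfer

variable {G H : Type*} [AddCommGroup G] [TopologicalSpace G] [IsTopologicalAddGroup G]
  [AddCommGroup H] [TopologicalSpace H] [IsTopologicalAddGroup H]

lemma HasCharacterExtension.exists_comp_eq [T2Space H] (hH : HasCharacterExtension H)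
    (f : G →ₜ+ H) {C : AddSubgroup G} (hC : IsCompact (C : Set G)) (ψ : PDual C)
    (hψ : ∀ c : C, f c = 0 → ψ c = 0) : ∃ η : PDual H, ∀ c : C, η (f c) = ψ c := by
  have : CompactSpace C := isCompact_iff_compactSpace.mp hC
  have hfC : IsCompact (C.map f.toAddMonoidHom : Set H) := by
    rw [AddSubgroup.coe_map]; exact hC.image f.continuous
  let q : C →ₜ+ C.map f.toAddMonoidHom :=
    ⟨f.toAddMonoidHom.addSubgroupMap C, (f.continuous.comp continuous_subtype_val).subtype_mk _⟩
  obtain ⟨φ, hφ⟩ := q.exists_comp_eq_of_surjective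
    (f.toAddMonoidHom.addSubgroupMap_surjective C) ψ
    (fun c hc => hψ c (congrArg Subtype.val hc))
  obtain ⟨η, hη⟩ := hH _ hfC φ
  exact ⟨η, fun c => (hη (q c)).trans (hφ c)⟩

lemma HasCharacterExtension.of_injective [T2Space H] (hH : HasCharacterExtension H)
    (f : G →ₜ+ H) (hf : Function.Injective f) : HasCharacterExtension G := by
  intro C hC ψ
  obtain ⟨η, hη⟩ := hH.exists_comp_eq f hC ψ fun c hc =>
    by rw [(Subtype.ext (hf (hc.trans (map_zero f).symm)) : c = 0), map_zero]
  exact ⟨η.comp f, hη⟩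

lemma HasCharacterSeparation.exists_comp_ne (hH : HasCharacterSeparation H) (f : G →ₜ+ H)
    {C : AddSubgroup G} (hC : IsCompact (C : Set G)) {y : G} (hy : f y ∉ C.map f.toAddMonoidHom) :
    ∃ η : PDual G, (∀ c ∈ C, η c = 0) ∧ η y ≠ 0 := by
  have hfC : IsCompact (C.map f.toAddMonoidHom : Set H) := by
    rw [AddSubgroup.coe_map]; exact hC.image f.continuous
  obtain ⟨η, hη, hηy⟩ := hH _ hfC _ hy
  exact ⟨η.comp f, fun c hc => hη _ (AddSubgroup.mem_map_of_mem _ hc), hηy⟩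

lemma HasCharacterSeparation.of_injective (hH : HasCharacterSeparation H) (f : G →ₜ+ H)
    (hf : Function.Injective f) : HasCharacterSeparation G := fun _ hC _ hy =>
  hH.exists_comp_ne f hC fun hmem => by
    obtain ⟨c, hc, hcy⟩ := AddSubgroup.mem_map.1 hmem
    exact hy (hf hcy ▸ hc)

end Transfer

section Prod

variable {G : Type*} [AddCommGroup G] [TopologicalSpace G] [IsTopologicalAddGroup G] [T2Space G]

lemma HasCharacterExtension.exists_prod_torus (hG : HasCharacterExtension G)
    {C : AddSubgroup (G × Torus)} (hC : IsCompact (C : Set (G × Torus))) (ψ : PDual C)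
    (η₀ : PDual Torus) (hη₀ : ∀ c : C, (c : G × Torus).1 = 0 → ψ c = η₀ (c : G × Torus).2) :
    ∃ η : PDual (G × Torus), (∀ c : C, η c = ψ c) ∧ ∀ t, η (0, t) = η₀ t := by
  -- `ψ - η₀ ∘ snd` is trivial on `C ∩ ({0} × T)`, so it factors through the projection to `G`.
  let ψ' : PDual C := ψ - η₀.comp ((ContinuousAddMonoidHom.snd G Torus).comp
    ⟨C.subtype, continuous_subtype_val⟩)
  have hψ' : ∀ c : C, ψ' c = ψ c - η₀ (c : G × Torus).2 := fun c => rfl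
  obtain ⟨F, hF⟩ := hG.exists_comp_eq (ContinuousAddMonoidHom.fst G Torus) hC ψ'
    fun c hc => by rw [hψ', hη₀ c hc, sub_self]
  refine ⟨F.coprod η₀, fun c => ?_, fun t => by simp⟩
  show F (c : G × Torus).1 + η₀ (c : G × Torus).2 = ψ c
  rw [show F (c : G × Torus).1 = ψ' c from hF c, hψ', sub_add_cancel]

lemma HasCharacterExtension.prod_torus (hG : HasCharacterExtension G) :
    HasCharacterExtension (G × Torus) := by
  intro C hC ψ
  set C₀ := C.comap (AddMonoidHom.inr G Torus)
  have hC₀ : IsCompact (C₀ : Set Torus) :=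
    (hC.isClosed.preimage (ContinuousAddMonoidHom.inr G Torus).continuous).isCompact
  obtain ⟨η₀, hη₀⟩ := Torus.hasCharacterExtension C₀ hC₀ (ψ.comp
    ⟨(AddMonoidHom.inr G Torus).addSubgroupComap C,
      (continuous_const.prodMk continuous_subtype_val).subtype_mk _⟩)
  obtain ⟨η, hη, -⟩ := hG.exists_prod_torus hC ψ η₀ fun c hc => by
    have hc₀ : (c : G × Torus).2 ∈ C₀ := by simp [C₀, ← hc]
    rw [hη₀ ⟨_, hc₀⟩]
    exact congrArg ψ (Subtype.ext (Prod.ext hc rfl))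
  exact ⟨η, hη⟩

lemma HasCharacterSeparation.prod_torus (hG : HasCharacterExtension G)
    (hG' : HasCharacterSeparation G) : HasCharacterSeparation (G × Torus) := by
  intro C hC y hy
  by_cases hy₁ : y.1 ∈ C.map (AddMonoidHom.fst G Torus)
  · obtain ⟨c₀, hc₀, hc₀y⟩ := AddSubgroup.mem_map.1 hy₁
    set C₀ := C.comap (AddMonoidHom.inr G Torus)
    have hC₀ : IsCompact (C₀ : Set Torus) :=
      (hC.isClosed.preimage (ContinuousAddMonoidHom.inr G Torus).continuous).isCompact
    obtain ⟨t, rfl⟩ : ∃ t, y = c₀ + (0, t) :=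
      ⟨y.2 - c₀.2, Prod.ext (by simpa using hc₀y.symm) (by simp)⟩
    have ht : t ∉ C₀ := fun ht => hy (C.add_mem hc₀ ht)
    obtain ⟨φ, hφ, hφt⟩ := Torus.hasCharacterSeparation C₀ hC₀ _ ht
    obtain ⟨η, hη, hη₀⟩ := hG.exists_prod_torus hC 0 φ fun c hc => by
      refine (hφ _ ?_).symm
      simp [C₀, ← hc]
    refine ⟨η, fun c hc => hη ⟨c, hc⟩, ?_⟩
    simpa [hη ⟨c₀, hc₀⟩, hη₀] using hφt
  · exact hG'.exists_comp_ne (ContinuousAddMonoidHom.fst G Torus) hC hy₁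

end Prod

def ContinuousAddMonoidHom.funLeft (M : Type*) [AddCommGroup M] [TopologicalSpace M]
    {α β : Type*} (g : α → β) : (β → M) →ₜ+ (α → M) :=
  ⟨(LinearMap.funLeft ℤ M g).toAddMonoidHom, continuous_pi fun a => continuous_apply (g a)⟩

lemma ContinuousAddMonoidHom.funLeft_injective (M : Type*) [AddCommGroup M] [TopologicalSpace M]
    {α β : Type*} {g : α → β} (hg : Function.Surjective g) :
    Function.Injective (ContinuousAddMonoidHom.funLeft M g) :=
  LinearMap.funLeft_injective_of_surjective ℤ M g hg

def optionSplit (α : Type*) : (Option α → Torus) →ₜ+ (α → Torus) × Torus :=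
  (ContinuousAddMonoidHom.funLeft Torus some).prod
    ⟨Pi.evalAddMonoidHom (fun _ => Torus) none, continuous_apply none⟩

lemma optionSplit_injective (α : Type*) : Function.Injective (optionSplit α) := by
  intro f g h
  funext i
  cases i with
  | none => exact congrArg Prod.snd h
  | some a => exact congrFun (congrArg Prod.fst h) a

lemma hasCharacterExtension_and_separation_pi_finite (α : Type*) [Finite α] :
    HasCharacterExtension (α → Torus) ∧ HasCharacterSeparation (α → Torus) := by
  refine Finite.induction_empty_option
    (P := fun α => HasCharacterExtension (α → Torus) ∧ HasCharacterSeparation (α → Torus))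
    (fun e h => ?_) ⟨fun C _ ψ => ⟨0, fun c => ?_⟩, fun C _ y hy => ?_⟩ (fun h => ?_) α
  · have hinj := ContinuousAddMonoidHom.funLeft_injective Torus e.surjective
    exact ⟨h.1.of_injective _ hinj, h.2.of_injective _ hinj⟩
  · rw [Subsingleton.elim c 0, map_zero]
    rfl
  · exact absurd (Subsingleton.elim y 0 ▸ C.zero_mem) hy
  · exact ⟨h.1.prod_torus.of_injective _ (optionSplit_injective _),
      (h.2.prod_torus h.1).of_injective _ (optionSplit_injective _)⟩

lemma exists_finite_of_mem_nhds_pi {D X : Type*} [TopologicalSpace X] {y : D → X}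
    {W : Set (D → X)} (hW : W ∈ 𝓝 y) :
    ∃ I : Set D, I.Finite ∧ ∀ z, (∀ i ∈ I, z i = y i) → z ∈ W := by
  rw [nhds_pi, Filter.mem_pi] at hW
  obtain ⟨I, hI, V, hV, hVW⟩ := hW
  exact ⟨I, hI, fun z hz => hVW fun i hi => hz i hi ▸ mem_of_mem_nhds (hV i)⟩

lemma hasCharacterExtension_pi (D : Type*) : HasCharacterExtension (D → Torus) := by
  intro C hC ψ
  obtain ⟨W, hW, hWψ⟩ : ∃ W ∈ 𝓝 (0 : D → Torus), Subtype.val ⁻¹' W ⊆ ψ ⁻¹' Lam := by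
    rw [← Filter.mem_comap, ← nhds_subtype_eq_comap]
    exact ψ.continuous.tendsto' 0 0 (map_zero ψ) Lam_mem_nhds_zero
  obtain ⟨I, hI, hIW⟩ := exists_finite_of_mem_nhds_pi hW
  have := hI.to_subtype
  -- `ψ` maps the subgroup of `C` vanishing on `I` into `Λ₁`, hence kills it.
  obtain ⟨η, hη⟩ := (hasCharacterExtension_and_separation_pi_finite I).1.exists_comp_eq
    (ContinuousAddMonoidHom.funLeft Torus (Subtype.val : I → D)) hC ψ
    fun c hc => eq_zero_of_forall_zsmul_mem_Lam fun n => by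
      rw [← map_zsmul]
      refine hWψ (hIW _ fun i hi => ?_)
      simp [show (c : D → Torus) i = 0 from congrFun hc ⟨i, hi⟩]
  exact ⟨η.comp _, hη⟩

lemma hasCharacterSeparation_pi (D : Type*) : HasCharacterSeparation (D → Torus) := by
  intro C hC y hy
  obtain ⟨I, hI, hIW⟩ := exists_finite_of_mem_nhds_pi (hC.isClosed.isOpen_compl.mem_nhds hy)
  have := hI.to_subtype
  refine (hasCharacterExtension_and_separation_pi_finite I).2.exists_comp_ne
    (ContinuousAddMonoidHom.funLeft Torus (Subtype.val : I → D)) hC fun hmem => ?_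
  obtain ⟨c, hc, hcy⟩ := AddSubgroup.mem_map.1 hmem
  exact hIW c (fun i hi => congrFun hcy ⟨i, hi⟩) hc

variable {A : Type*} [AddCommGroup A] [TopologicalSpace A] [IsTopologicalAddGroup A]

variable (A) in
/-- `α_A` followed by the inclusion `Â̂ ⊆ T^Â`. -/
def evalPi : A →ₜ+ (PDual A → Torus) :=
  ⟨AddMonoidHom.pi fun χ : PDual A => χ.toAddMonoidHom, continuous_pi fun χ => χ.continuous⟩

lemma evalPi_injective (hinj : Function.Injective (evalHom : A → PDual (PDual A))) :
    Function.Injective (evalPi A) := fun _ _ h =>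
  hinj (ContinuousAddMonoidHom.ext (congrFun h))

lemma apply_eq_zero_of_mem_prepolar_polar {S : Set A} {a : A} (ha : a ∈ prepolar (polar S))
    {χ : PDual A} (hχ : ∀ s ∈ S, χ s = 0) : χ a = 0 :=
  eq_zero_of_forall_zsmul_mem_Lam fun n =>
    ha ((Torus.zsmulChar n).comp χ) fun s hs => by simp [hχ s hs, zero_mem_Lam]

theorem compact_subgroup_dually_closed_embedded_general
    (hinj : Function.Injective (evalHom : A → PDual (PDual A)))
    (K : AddSubgroup A) (hK : IsCompact (K : Set A)) :
    prepolar (polar (K : Set A)) = (K : Set A) ∧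
    Function.Surjective
      (fun χ : PDual A => χ.comp
        ({ K.subtype with continuous_toFun := continuous_subtype_val } :
          ContinuousAddMonoidHom K A)) := by
  have hExt := (hasCharacterExtension_pi (PDual A)).of_injective _ (evalPi_injective hinj)
  have hSep := (hasCharacterSeparation_pi (PDual A)).of_injective _ (evalPi_injective hinj)
  refine ⟨subset_antisymm (fun a ha => ?_) fun k hk χ hχ => hχ k hk, fun ψ => ?_⟩
  · by_contra haK
    obtain ⟨χ, hχ, hχa⟩ := hSep K hK a haK
    exact hχa (apply_eq_zero_of_mem_prepolar_polar ha hχ)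
  · obtain ⟨η, hη⟩ := hExt K hK ψ
    exact ⟨η, ContinuousAddMonoidHom.ext hη⟩

/-- If `A` is Hausdorff with `α_A` injective and `K ≤ A` is a compact subgroup, then `K`
is dually closed (`K = K^▷◁`) and dually embedded (every continuous character of `K`
extends to `A`). -/
theorem compact_subgroup_dually_closed_embedded [T2Space A]
    (hinj : Function.Injective (evalHom : A → PDual (PDual A)))
    (K : AddSubgroup A) (hK : IsCompact (K : Set A)) :
    prepolar (polar (K : Set A)) = (K : Set A) ∧
    Function.Surjective
      (fun χ : PDual A => χ.comp
        ({ K.subtype with continuous_toFun := continuous_subtype_val } :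
          ContinuousAddMonoidHom K A)) :=
  compact_subgroup_dually_closed_embedded_general hinj K hK

end
end
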